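/- arXiv:2412.13962 — 2 statements merged into one kernel-verified Lean document; each statement's English description precedes it below -/
import Mathlib

section
/- Let S be a finite set, p : S → ℝ≥0 a probability distribution (∑ p(s) = 1), and c : S → ℝ, ĉ : S → ℝ, B ∈ ℝ, Δ_act, c_max, c̄, γ ∈ ℝ with γ > 0. Suppose ∑_s p(s)·ĉ(s) = c̄, ∑_s p(s)·c(s) = (c_max - c̄)/γ and c̄ + γ·B - c_max ≠ 0. Define for each s: Δ'(s) = c(s) + (Δ_act - c_max)·(B - c(s))/(c̄ + γ·B - c_max). Then ∑_s p(s)·(ĉ(s) + γ·Δ'(s)) = Δ_act. -/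
theorem stmt_6 {S : Type*} [Fintype S] (p : S → ℝ) (hp0 : ∀ s, 0 ≤ p s)
    (hp1 : ∑ s, p s = 1) (c chat : S → ℝ) (B Δ_act c_max c_bar γ : ℝ) (hγ : 0 < γ)
    (hc : ∑ s, p s * c s = (c_max - c_bar) / γ)
    (hchat : ∑ s, p s * chat s = c_bar)
    (hden : c_bar + γ * B - c_max ≠ 0)
    (Δ' : S → ℝ)
    (hΔ' : ∀ s, Δ' s = c s + (Δ_act - c_max) * (B - c s) / (c_bar + γ * B - c_max)) :
    ∑ s, p s * (chat s + γ * Δ' s) = Δ_act := by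
  have key : ∀ s, p s * (chat s + γ * Δ' s) =
      p s * chat s + γ * (p s * c s)
        + (Δ_act - c_max) / (c_bar + γ * B - c_max) * (γ * (p s * B - p s * c s)) := by
    intro s
    rw [hΔ' s]
    field_simp
    ring
  simp only [key]
  rw [Finset.sum_add_distrib, Finset.sum_add_distrib, ← Finset.mul_sum, ← Finset.mul_sum, ← Finset.mul_sum,
    Finset.sum_sub_distrib, ← Finset.sum_mul, hp1, hchat, hc]
  field_simp
  ring
end

section
/- Let S be a finite set with probability distribution p, let ĉ : S → ℝ be immediate costs with expectation c̄ = ∑_s p(s)·ĉ(s), let c : S → ℝ satisfy ∑_s p(s)·c(s) = (c_min - c̄)/γ for reals c_min and γ > 0, and let Δ_act < c_min. For each s with p(s) > 0 define Δ'(s) = c(s) - (c_min - Δ_act)/(p(s)·γ). Then ∑_{s : p(s)>0} p(s)·(ĉ(s) + γ·Δ'(s)) = c_min - k·(c_min - Δ_act) ≤ Δ_act, where k is the number of states s with p(s) > 0 (assume k ≥ 1). -/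
/-!
Off the support of `p` the terms vanish, so the support sums of `p * ĉ` and `p * c` are the full
expectations `c̄` and `(c_min - c̄) / γ`. Each support state is charged the whole deficit
`c_min - Δ_act` (the factor `p s * γ` cancels), so the total equals `c̄ + γ (c_min - c̄) / γ - k (c_min - Δ_act)`,
and `k ≥ 1` with a positive deficit puts it below `Δ_act`.
-/

open Finset

theorem sum_filter_pos_mul_eq_sum {S : Type*} (t : Finset S) {p : S → ℝ} (hp : ∀ s, 0 ≤ p s)
    (f : S → ℝ) : ∑ s ∈ t with 0 < p s, p s * f s = ∑ s ∈ t, p s * f s :=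
  sum_filter_of_ne fun s _ hs => (hp s).lt_of_ne' (left_ne_zero_of_mul hs)

theorem sum_mul_add_mul_sub_div_mul {S : Type*} (t : Finset S) {p : S → ℝ} (hp : ∀ s ∈ t, p s ≠ 0)
    (f g : S → ℝ) {γ : ℝ} (hγ : γ ≠ 0) (d : ℝ) :
    ∑ s ∈ t, p s * (f s + γ * (g s - d / (p s * γ))) =
      ∑ s ∈ t, p s * f s + γ * ∑ s ∈ t, p s * g s - #t * d := by
  have hterm : ∀ s ∈ t, p s * (f s + γ * (g s - d / (p s * γ))) =
      p s * f s + γ * (p s * g s) - d := by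
    intro s hs
    field_simp [hp s hs]
    ring
  rw [sum_congr rfl hterm, sum_sub_distrib, sum_add_distrib, ← mul_sum, sum_const, nsmul_eq_mul]

theorem stmt_7_general {S : Type*} [Fintype S] (p chat c : S → ℝ) (γ c_min Δ_act c_bar : ℝ)
    (hγ : 0 < γ) (hp0 : ∀ s, 0 ≤ p s)
    (hcbar : c_bar = ∑ s, p s * chat s)
    (hc : ∑ s, p s * c s = (c_min - c_bar) / γ)
    (hΔ : Δ_act < c_min)
    (Δ' : S → ℝ) (hΔ' : ∀ s, 0 < p s → Δ' s = c s - (c_min - Δ_act) / (p s * γ))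
    (k : ℕ) (hk : k = (Finset.univ.filter (fun s => 0 < p s)).card) (hk1 : 1 ≤ k) :
    (∑ s ∈ Finset.univ.filter (fun s => 0 < p s), p s * (chat s + γ * Δ' s))
        = c_min - (k : ℝ) * (c_min - Δ_act) ∧
      c_min - (k : ℝ) * (c_min - Δ_act) ≤ Δ_act := by
  refine ⟨?_, ?_⟩
  · calc ∑ s ∈ univ with 0 < p s, p s * (chat s + γ * Δ' s)
        = ∑ s ∈ univ with 0 < p s, p s * (chat s + γ * (c s - (c_min - Δ_act) / (p s * γ))) :=
          sum_congr rfl fun s hs => by rw [hΔ' s (mem_filter.mp hs).2]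
      _ = c_bar + γ * ((c_min - c_bar) / γ) - k * (c_min - Δ_act) := by
          rw [sum_mul_add_mul_sub_div_mul _ (fun s hs => (mem_filter.mp hs).2.ne') _ _ hγ.ne',
            sum_filter_pos_mul_eq_sum _ hp0, sum_filter_pos_mul_eq_sum _ hp0, hc, ← hcbar, hk]
      _ = c_min - k * (c_min - Δ_act) := by field_simp; ring
  · have hk1' : (1 : ℝ) ≤ k := by exact_mod_cast hk1
    nlinarith

theorem stmt_7 {S : Type*} [Fintype S] (p chat c : S → ℝ) (γ c_min Δ_act c_bar : ℝ)
    (hγ : 0 < γ) (hp0 : ∀ s, 0 ≤ p s) (hp1 : ∑ s, p s = 1)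
    (hcbar : c_bar = ∑ s, p s * chat s)
    (hc : ∑ s, p s * c s = (c_min - c_bar) / γ)
    (hΔ : Δ_act < c_min)
    (Δ' : S → ℝ) (hΔ' : ∀ s, 0 < p s → Δ' s = c s - (c_min - Δ_act) / (p s * γ))
    (k : ℕ) (hk : k = (Finset.univ.filter (fun s => 0 < p s)).card) (hk1 : 1 ≤ k) :
    (∑ s ∈ Finset.univ.filter (fun s => 0 < p s), p s * (chat s + γ * Δ' s))
        = c_min - (k : ℝ) * (c_min - Δ_act) ∧
      c_min - (k : ℝ) * (c_min - Δ_act) ≤ Δ_act :=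
  stmt_7_general p chat c γ c_min Δ_act c_bar hγ hp0 hcbar hc hΔ Δ' hΔ' k hk hk1
end
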